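/- arXiv:2605.25392 — 4 statements merged into one kernel-verified Lean document; each statement's English description precedes it below -/
import Mathlib

section
/- Let c > 0, m ∈ ℝ, ρ > 0, T > 0, and define δ(t) = c·m·((c+ρ)(1 - e^{t-T}) - ρ·e^{t-T}(T-t)) / (c + (1-e^{t-T})ρ) and P(t) = c·e^{t-T}/(c + (1-e^{t-T})ρ). Then δ satisfies the linear ODE δ'(t) = δ(t)·(ρ·P(t)/c + 1) - c·m with terminal condition δ(T) = 0. -/
/-!
Write `δ = N / D` with `D t = c + (1 - e^{t-T}) ρ` and `N = δ D`. The denominator solves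
`D' = -ρ e^{t-T} = -(ρ P / c) D`, and the numerator solves `N' = N - c m D`; the quotient of
such a pair solves `δ' = (1 + ρ P / c) δ - c m`. The denominator stays positive on `t ≤ T`
because `e^{t-T} ≤ 1`.
-/

open Real

theorem HasDerivAt.div_of_linear {𝕜 : Type*} [NontriviallyNormedField 𝕜] {N D : 𝕜 → 𝕜}
    {t a b g : 𝕜} (hN : HasDerivAt N (a * N t + b * D t) t) (hD : HasDerivAt D (g * D t) t)
    (hD0 : D t ≠ 0) : HasDerivAt (fun s => N s / D s) ((a - g) * (N t / D t) + b) t := by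
  refine (hN.div hD hD0).congr_deriv ?_
  field_simp
  ring

section

variable (c m ρ T : ℝ)

noncomputable def deltaDenom (t : ℝ) : ℝ := c + (1 - exp (t - T)) * ρ

noncomputable def deltaNumer (t : ℝ) : ℝ :=
  c * m * ((c + ρ) * (1 - exp (t - T)) - ρ * exp (t - T) * (T - t))

variable {c ρ T}

theorem deltaDenom_pos (hc : 0 < c) (hρ : 0 ≤ ρ) {t : ℝ} (ht : t ≤ T) : 0 < deltaDenom c ρ T t := by
  have he : exp (t - T) ≤ 1 := exp_le_one_iff.mpr (by linarith)
  unfold deltaDenom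
  nlinarith

theorem hasDerivAt_exp_sub (T t : ℝ) : HasDerivAt (fun s => exp (s - T)) (exp (t - T)) t := by
  simpa using ((hasDerivAt_id t).sub_const T).exp

theorem hasDerivAt_deltaDenom (t : ℝ) :
    HasDerivAt (deltaDenom c ρ T) (-(ρ * exp (t - T))) t :=
  ((((hasDerivAt_exp_sub T t).const_sub 1).mul_const ρ).const_add c).congr_deriv (by ring)

theorem hasDerivAt_deltaNumer (t : ℝ) :
    HasDerivAt (deltaNumer c m ρ T) (deltaNumer c m ρ T t - c * m * deltaDenom c ρ T t) t := by
  have he := hasDerivAt_exp_sub T t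
  refine (((he.const_sub 1).const_mul (c + ρ) |>.sub
    ((he.const_mul ρ).mul ((hasDerivAt_id t).const_sub T))).const_mul (c * m)).congr_deriv ?_
  simp only [deltaNumer, deltaDenom, id]
  ring

end

theorem delta_linear_ode_general
    (c m ρ T : ℝ) (hc : 0 < c) (hρ : 0 < ρ)
    (δ P : ℝ → ℝ)
    (hδ : ∀ t, δ t = c * m * ((c + ρ) * (1 - exp (t - T)) - ρ * exp (t - T) * (T - t))
        / (c + (1 - exp (t - T)) * ρ))
    (hP : ∀ t, P t = c * exp (t - T) / (c + (1 - exp (t - T)) * ρ)) :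
    δ T = 0 ∧
    ∀ t ∈ Set.Icc (0:ℝ) T,
      HasDerivAt δ (δ t * (ρ * P t / c + 1) - c * m) t := by
  have hδN : δ = fun t => deltaNumer c m ρ T t / deltaDenom c ρ T t := funext hδ
  refine ⟨by simp [hδ], fun t ht => ?_⟩
  have hD := deltaDenom_pos hc hρ.le ht.2
  have hD' : HasDerivAt (deltaDenom c ρ T) (-(ρ * P t / c) * deltaDenom c ρ T t) t := by
    refine (hasDerivAt_deltaDenom t).congr_deriv ?_
    rw [hP t, ← deltaDenom]
    field_simp
  have hN : HasDerivAt (deltaNumer c m ρ T)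
      (1 * deltaNumer c m ρ T t + -(c * m) * deltaDenom c ρ T t) t :=
    (hasDerivAt_deltaNumer m t).congr_deriv (by ring)
  rw [hδN]
  exact (hN.div_of_linear hD' hD.ne').congr_deriv (by ring)

theorem delta_linear_ode
    (c m ρ T : ℝ) (hc : 0 < c) (hρ : 0 < ρ) (hT : 0 < T)
    (δ P : ℝ → ℝ)
    (hδ : ∀ t, δ t = c * m * ((c + ρ) * (1 - exp (t - T)) - ρ * exp (t - T) * (T - t))
        / (c + (1 - exp (t - T)) * ρ))
    (hP : ∀ t, P t = c * exp (t - T) / (c + (1 - exp (t - T)) * ρ)) :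
    δ T = 0 ∧
    ∀ t ∈ Set.Icc (0:ℝ) T,
      HasDerivAt δ (δ t * (ρ * P t / c + 1) - c * m) t :=
  delta_linear_ode_general c m ρ T hc hρ δ P hδ hP
end

section
/- Let c : [0,T] → ℝ be continuous with c ≥ ε > 0, ρ > 0, and let P solve P' = P(ρP/c + 1), P(T) = 1, with H(t) = ∫_0^t(ρP/c + 1)ds. Then ρ·∫_0^T (e^{-s}/c(s))·P(s)² ds = e^{-T} - P(0). -/
/-! Along any solution of `P' = P (f + 1)` the discounted value `e^{-t} P(t)` has derivative
`e^{-t} P(t) f(t)`; for the Riccati equation `f = ρ P / c` this is `ρ e^{-t} P² / c`, and the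
fundamental theorem of calculus together with `P(T) = 1` gives the identity. -/

open Real MeasureTheory intervalIntegral

theorem hasDerivAt_exp_neg_mul {P : ℝ → ℝ} {g t : ℝ} (hP : HasDerivAt P (P t * (g + 1)) t) :
    HasDerivAt (fun s => exp (-s) * P s) (exp (-t) * P t * g) t := by
  have hexp : HasDerivAt (fun s : ℝ => exp (-s)) (-exp (-t)) t := by
    simpa using (hasDerivAt_neg t).exp
  exact (hexp.mul hP).congr_deriv (by ring)

theorem integral_exp_neg_mul_mul_eq_sub {a b : ℝ} (hab : a ≤ b) {P f : ℝ → ℝ}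
    (hf : ContinuousOn f (Set.Icc a b))
    (hP : ∀ t ∈ Set.Icc a b, HasDerivAt P (P t * (f t + 1)) t) :
    ∫ s in a..b, exp (-s) * P s * f s = exp (-b) * P b - exp (-a) * P a := by
  have hPc : ContinuousOn P (Set.Icc a b) := fun t ht =>
    (hP t ht).continuousAt.continuousWithinAt
  rw [← Set.uIcc_of_le hab] at hf hP hPc
  refine integral_eq_sub_of_hasDerivAt (fun t ht => hasDerivAt_exp_neg_mul (hP t ht)) ?_
  exact ((continuous_exp.comp continuous_neg).continuousOn.mul hPc |>.mul hf).intervalIntegrable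

theorem riccati_integral_identity_general
    (T ρ ε : ℝ) (hT : 0 < T) (hε : 0 < ε)
    (c : ℝ → ℝ) (hcc : ContinuousOn c (Set.Icc 0 T))
    (hcε : ∀ t ∈ Set.Icc (0:ℝ) T, ε ≤ c t)
    (P : ℝ → ℝ) (hPT : P T = 1)
    (hPode : ∀ t ∈ Set.Icc (0:ℝ) T,
      HasDerivAt P (P t * (ρ * P t / c t + 1)) t) :
    ρ * ∫ s in (0:ℝ)..T, (exp (-s) / c s) * (P s) ^ 2 = exp (-T) - P 0 := by
  have hPc : ContinuousOn P (Set.Icc 0 T) := fun t ht =>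
    (hPode t ht).continuousAt.continuousWithinAt
  have hc0 : ∀ t ∈ Set.Icc (0:ℝ) T, c t ≠ 0 := fun t ht => (hε.trans_le (hcε t ht)).ne'
  have hf : ContinuousOn (fun t => ρ * P t / c t) (Set.Icc 0 T) :=
    (continuousOn_const.mul hPc).div hcc hc0
  have hFTC := integral_exp_neg_mul_mul_eq_sub hT.le hf hPode
  calc ρ * ∫ s in (0:ℝ)..T, (exp (-s) / c s) * (P s) ^ 2
      = ∫ s in (0:ℝ)..T, exp (-s) * P s * (ρ * P s / c s) := by
        rw [← intervalIntegral.integral_const_mul]; congr 1; ext s; ring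
    _ = exp (-T) - P 0 := by rw [hFTC, hPT]; simp

theorem riccati_integral_identity
    (T ρ ε : ℝ) (hT : 0 < T) (hρ : 0 < ρ) (hε : 0 < ε)
    (c : ℝ → ℝ) (hcc : ContinuousOn c (Set.Icc 0 T))
    (hcε : ∀ t ∈ Set.Icc (0:ℝ) T, ε ≤ c t)
    (P : ℝ → ℝ) (hPT : P T = 1)
    (hPode : ∀ t ∈ Set.Icc (0:ℝ) T,
      HasDerivAt P (P t * (ρ * P t / c t + 1)) t) :
    ρ * ∫ s in (0:ℝ)..T, (exp (-s) / c s) * (P s) ^ 2 = exp (-T) - P 0 :=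
  riccati_integral_identity_general T ρ ε hT hε c hcc hcε P hPT hPode
end

section
/- Let c : [0,T] → ℝ be continuous with c ≥ ε > 0, ρ > 0, P the solution of P' = P(ρP/c+1), P(T)=1, H(t) = ∫_0^t(ρP/c+1)ds, and α(T) = e^{-H(T)+T}∫_0^T (e^{-s}/c(s))e^{H(s)}P(s) ds. Then 1 - ρ·α(T) = e^T·P(0), and in particular 1 - ρ·α(T) > 0. -/
/-!
Since `H' = ρP/c + 1` is the logarithmic derivative of `P`, the product `P e^{-H}` is constant,
so `P t = e^{H t - H T}`. This turns the integrand of `α` into `e^T · e^{-s} P² / c`, while the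
Riccati equation makes `ρ e^{-s} P² / c` the derivative of `e^{-s} P`. Hence
`ρ α = e^T (e^{-T} - P 0)`, and `P 0 = e^{-H T} > 0`.
-/

open Real MeasureTheory intervalIntegral

open Set

theorem ContinuousOn.hasDerivAt_integral_of_mem_Ioo {f : ℝ → ℝ} {a b x : ℝ}
    (hf : ContinuousOn f (Icc a b)) (hx : x ∈ Ioo a b) :
    HasDerivAt (fun t => ∫ s in a..t, f s) (f x) x :=
  integral_hasDerivAt_right
    ((hf.mono (Icc_subset_Icc_right hx.2.le)).intervalIntegrable_of_Icc hx.1.le)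
    ((hf.mono Ioo_subset_Icc_self).stronglyMeasurableAtFilter isOpen_Ioo x hx)
    (hf.continuousAt (Icc_mem_nhds hx.1 hx.2))

theorem eq_right_of_hasDerivAt_zero {f : ℝ → ℝ} {a b x : ℝ} (hf : ContinuousOn f (Icc a b))
    (hf' : ∀ y ∈ Ioo a b, HasDerivAt f 0 y) (hx : x ∈ Icc a b) : f x = f b := by
  have hb : b ∈ Icc a b := ⟨hx.1.trans hx.2, le_rfl⟩
  have hderiv : ∀ y ∈ interior (Icc a b), HasDerivWithinAt f 0 (interior (Icc a b)) y := by
    rw [interior_Icc]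
    exact fun y hy => (hf' y hy).hasDerivWithinAt
  exact le_antisymm
    (monotoneOn_of_hasDerivWithinAt_nonneg (convex_Icc a b) hf hderiv (fun _ _ => le_rfl)
      hx hb hx.2)
    (antitoneOn_of_hasDerivWithinAt_nonpos (convex_Icc a b) hf hderiv (fun _ _ => le_rfl)
      hx hb hx.2)

theorem eq_mul_exp_sub_of_hasDerivAt {P H f : ℝ → ℝ} {a b x : ℝ}
    (hP : ContinuousOn P (Icc a b)) (hH : ContinuousOn H (Icc a b))
    (hP' : ∀ y ∈ Ioo a b, HasDerivAt P (P y * f y) y)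
    (hH' : ∀ y ∈ Ioo a b, HasDerivAt H (f y) y) (hx : x ∈ Icc a b) :
    P x = P b * exp (H x - H b) := by
  have hconst : P x * exp (-H x) = P b * exp (-H b) := by
    refine eq_right_of_hasDerivAt_zero (f := fun t => P t * exp (-H t))
      (hP.mul (continuous_exp.comp_continuousOn hH.neg)) (fun y hy => ?_) hx
    exact ((hP' y hy).fun_mul (hH' y hy).fun_neg.exp).congr_deriv (by ring)
  calc P x = P x * exp (-H x) * exp (H x) := by rw [mul_assoc, ← exp_add]; simp
    _ = P b * exp (H x - H b) := by rw [hconst, mul_assoc, ← exp_add]; ring_nf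

/-- The integrand is the derivative of `s ↦ e^{-s} P s`. -/
theorem integral_mul_exp_neg_div_mul_sq {ρ a b : ℝ} {c P : ℝ → ℝ} (hab : a ≤ b)
    (hc : ContinuousOn c (Icc a b)) (hc0 : ∀ t ∈ Icc a b, c t ≠ 0)
    (hP' : ∀ t ∈ Icc a b, HasDerivAt P (P t * (ρ * P t / c t + 1)) t) :
    ∫ s in a..b, ρ * (exp (-s) / c s) * P s ^ 2 = exp (-b) * P b - exp (-a) * P a := by
  rw [← uIcc_of_le hab] at hc hc0 hP'
  refine integral_eq_sub_of_hasDerivAt (f := fun s => exp (-s) * P s) (fun t ht => ?_)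
    (ContinuousOn.intervalIntegrable ?_)
  · refine ((hasDerivAt_neg t).exp.fun_mul (hP' t ht)).congr_deriv ?_
    field_simp [hc0 t ht]
    ring
  · exact (continuousOn_const.mul
      ((continuous_exp.comp continuous_neg).continuousOn.div hc hc0)).mul
        ((HasDerivAt.continuousOn hP').pow 2)

theorem supply_curve_slope_identity_general
    (T ρ ε : ℝ) (hT : 0 < T) (hε : 0 < ε)
    (c : ℝ → ℝ) (hcc : ContinuousOn c (Set.Icc 0 T))
    (hcε : ∀ t ∈ Set.Icc (0:ℝ) T, ε ≤ c t)
    (P : ℝ → ℝ) (hPT : P T = 1)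
    (hPode : ∀ t ∈ Set.Icc (0:ℝ) T,
      HasDerivAt P (P t * (ρ * P t / c t + 1)) t)
    (H : ℝ → ℝ)
    (hH : ∀ t, H t = ∫ s in (0:ℝ)..t, (ρ * P s / c s + 1))
    (α : ℝ)
    (hα : α = exp (-(H T) + T) * ∫ s in (0:ℝ)..T, (exp (-s) / c s) * exp (H s) * P s) :
    1 - ρ * α = exp T * P 0 ∧ 0 < 1 - ρ * α := by
  have hc0 : ∀ t ∈ Icc 0 T, c t ≠ 0 := fun t ht => (hε.trans_le (hcε t ht)).ne'
  have hPc : ContinuousOn P (Icc 0 T) := HasDerivAt.continuousOn hPode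
  have hfc : ContinuousOn (fun s => ρ * P s / c s + 1) (Icc 0 T) :=
    ((continuousOn_const.mul hPc).div hcc hc0).add continuousOn_const
  have hHd : ∀ t ∈ Ioo 0 T, HasDerivAt H (ρ * P t / c t + 1) t := fun t ht => by
    simpa only [← hH] using hfc.hasDerivAt_integral_of_mem_Ioo ht
  have hHc : ContinuousOn H (Icc 0 T) := by
    simpa only [← hH, uIcc_of_le hT.le] using continuousOn_primitive_interval
      ((hfc.integrableOn_Icc (μ := volume)).mono_set (uIcc_of_le hT.le).subset)
  have hP : ∀ t ∈ Icc 0 T, P t = exp (H t - H T) := fun t ht => by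
    simpa [hPT] using eq_mul_exp_sub_of_hasDerivAt hPc hHc
      (fun y hy => hPode y (Ioo_subset_Icc_self hy)) hHd ht
  have hP0 : P 0 = exp (-H T) := by simpa [hH] using hP 0 ⟨le_rfl, hT.le⟩
  have hρα : ρ * α = exp T * ∫ s in 0..T, ρ * (exp (-s) / c s) * P s ^ 2 := by
    rw [hα, ← intervalIntegral.integral_const_mul, ← intervalIntegral.integral_const_mul,
      ← intervalIntegral.integral_const_mul]
    refine integral_congr fun s hs => ?_
    rw [uIcc_of_le hT.le] at hs
    have hexp : exp (-H T + T) * exp (H s) = exp T * P s := by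
      rw [hP s hs, ← exp_add, ← exp_add]; ring_nf
    linear_combination (ρ * (exp (-s) / c s) * P s) * hexp
  have hslope : 1 - ρ * α = exp T * P 0 := by
    rw [hρα, integral_mul_exp_neg_div_mul_sq hT.le hcc hc0 hPode, hPT]
    simp [mul_sub, ← exp_add]
  refine ⟨hslope, ?_⟩
  rw [hslope, hP0]
  positivity

theorem supply_curve_slope_identity
    (T ρ ε : ℝ) (hT : 0 < T) (hρ : 0 < ρ) (hε : 0 < ε)
    (c : ℝ → ℝ) (hcc : ContinuousOn c (Set.Icc 0 T))
    (hcε : ∀ t ∈ Set.Icc (0:ℝ) T, ε ≤ c t)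
    (P : ℝ → ℝ) (hPT : P T = 1)
    (hPode : ∀ t ∈ Set.Icc (0:ℝ) T,
      HasDerivAt P (P t * (ρ * P t / c t + 1)) t)
    (H : ℝ → ℝ)
    (hH : ∀ t, H t = ∫ s in (0:ℝ)..t, (ρ * P s / c s + 1))
    (α : ℝ)
    (hα : α = exp (-(H T) + T) * ∫ s in (0:ℝ)..T, (exp (-s) / c s) * exp (H s) * P s) :
    1 - ρ * α = exp T * P 0 ∧ 0 < 1 - ρ * α :=
  supply_curve_slope_identity_general T ρ ε hT hε c hcc hcε P hPT hPode H hH α hα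
end

section
/- Let c^Y, c^H, m > 0, T > 0. Define for each constant cost c the large-ρ limits p(c) = c·e^{-T}/(1-e^{-T}) and d(c) = (c·m/(1-e^{-T}))·(1-e^{-T}-T·e^{-T}), and b(c) = (c·m/(1-e^{-T}))·(T-(1-e^{-T})). Under the spot-parity constraint (e^T-1)·(p(c^Y)-p(c^H))·𝔡̄ - (b(c^Y)-b(c^H)) - (d(c^Y)-d(c^H)) = 0 with 𝔡̄ determined by this equation, the limiting forward differential equals (p(c^Y)-p(c^H))·𝔡̄ + (d(c^Y)-d(c^H)) = m·(c^Y - c^H). In particular, if c^Y > c^H then the limiting forward differential is strictly positive. -/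
/-!
Every quantity is linear in the cost: with `u = e^{-T}`, the three limits are `c` times
`u / (1 - u)`, `m (1 - u - T u) / (1 - u)` and `m (T - 1 + u) / (1 - u)`. Since
`(e^T - 1) u = 1 - u`, spot parity collapses to `Δc · 𝔡̄ = m Δc T`, and substituting this
into the forward differential makes the `T u` terms cancel, leaving `m Δc`.
-/

open Real

lemma exp_sub_one_mul_exp_neg (T : ℝ) : (exp T - 1) * exp (-T) = 1 - exp (-T) := by
  rw [sub_mul, ← exp_add, add_neg_cancel, exp_zero, one_mul]

lemma one_sub_exp_neg_ne_zero {T : ℝ} (hT : T ≠ 0) : 1 - exp (-T) ≠ 0 := by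
  rw [sub_ne_zero, ne_comm, Ne, exp_eq_one_iff, neg_eq_zero]
  exact hT

section LargeRhoLimits

variable {cY cH m T d : ℝ} {p dd b : ℝ → ℝ}

lemma cost_gap_mul_demand_of_spot_parity (hT : T ≠ 0)
    (hp : ∀ c, p c = c * exp (-T) / (1 - exp (-T)))
    (hd : ∀ c, dd c = (c * m / (1 - exp (-T))) * (1 - exp (-T) - T * exp (-T)))
    (hb : ∀ c, b c = (c * m / (1 - exp (-T))) * (T - (1 - exp (-T))))
    (hparity : (exp T - 1) * (p cY - p cH) * d - (b cY - b cH) - (dd cY - dd cH) = 0) :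
    (cY - cH) * d = m * (cY - cH) * T := by
  have hq := one_sub_exp_neg_ne_zero hT
  have hpgap : (exp T - 1) * (p cY - p cH) = cY - cH := by
    rw [hp, hp, ← sub_div, ← sub_mul, mul_div_assoc', mul_left_comm,
      exp_sub_one_mul_exp_neg, mul_div_cancel_right₀ _ hq]
  rw [hpgap, hb, hb, hd, hd] at hparity
  field_simp at hparity
  refine mul_left_cancel₀ hq ?_
  linear_combination hparity

lemma forward_differential_eq_of_cost_gap_mul_demand (hT : T ≠ 0)
    (hp : ∀ c, p c = c * exp (-T) / (1 - exp (-T)))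
    (hd : ∀ c, dd c = (c * m / (1 - exp (-T))) * (1 - exp (-T) - T * exp (-T)))
    (hgap : (cY - cH) * d = m * (cY - cH) * T) :
    (p cY - p cH) * d + (dd cY - dd cH) = m * (cY - cH) := by
  have hq := one_sub_exp_neg_ne_zero hT
  rw [hp, hp, hd, hd]
  field_simp
  linear_combination exp (-T) * hgap

end LargeRhoLimits

theorem deterministic_benchmark_forward_differential_general
    (cY cH m T d : ℝ) (hm : 0 < m) (hT : 0 < T)
    (p dd b : ℝ → ℝ)
    (hp : ∀ c, p c = c * exp (-T) / (1 - exp (-T)))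
    (hd : ∀ c, dd c = (c * m / (1 - exp (-T))) * (1 - exp (-T) - T * exp (-T)))
    (hb : ∀ c, b c = (c * m / (1 - exp (-T))) * (T - (1 - exp (-T))))
    (hparity : (exp T - 1) * (p cY - p cH) * d - (b cY - b cH) - (dd cY - dd cH) = 0) :
    (p cY - p cH) * d + (dd cY - dd cH) = m * (cY - cH) ∧
    (cH < cY → 0 < (p cY - p cH) * d + (dd cY - dd cH)) := by
  have hgap := cost_gap_mul_demand_of_spot_parity hT.ne' hp hd hb hparity
  have hfwd := forward_differential_eq_of_cost_gap_mul_demand hT.ne' hp hd hgap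
  exact ⟨hfwd, fun hlt => hfwd ▸ mul_pos hm (sub_pos.2 hlt)⟩

theorem deterministic_benchmark_forward_differential
    (cY cH m T d : ℝ) (hcY : 0 < cY) (hcH : 0 < cH) (hm : 0 < m) (hT : 0 < T)
    (p dd b : ℝ → ℝ)
    (hp : ∀ c, p c = c * exp (-T) / (1 - exp (-T)))
    (hd : ∀ c, dd c = (c * m / (1 - exp (-T))) * (1 - exp (-T) - T * exp (-T)))
    (hb : ∀ c, b c = (c * m / (1 - exp (-T))) * (T - (1 - exp (-T))))
    (hparity : (exp T - 1) * (p cY - p cH) * d - (b cY - b cH) - (dd cY - dd cH) = 0) :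
    (p cY - p cH) * d + (dd cY - dd cH) = m * (cY - cH) ∧
    (cH < cY → 0 < (p cY - p cH) * d + (dd cY - dd cH)) :=
  deterministic_benchmark_forward_differential_general cY cH m T d hm hT p dd b hp hd hb hparity
end
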